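/- arXiv:math/0512508 — 4 statements merged into one kernel-verified Lean document; each statement's English description precedes it below -/
import Mathlib

section
/- Define J : 𝔞(h,𝒜) → B(ℂ ⊕ h ⊕ ℂ) by J(α,x,y,A)(γ ⊕ u ⊕ δ) = (y(u) + αδ) ⊕ (Au + δx) ⊕ 0, and let G ∈ B(ℂ ⊕ h ⊕ ℂ) be the flip G(γ ⊕ u ⊕ δ) = δ ⊕ u ⊕ γ. Then J is an injective linear map which is multiplicative, J(ab) = J(a)J(b) for all a, b ∈ 𝔞(h,𝒜), and the involution is implemented by the pseudo-Euclidean metric G: J(a⋆) = G ∘ J(a)† ∘ G, where J(a)† is the Hilbert-space adjoint of J(a). -/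
/-!
Vacuum Itô algebra: the fundamental pseudo-Euclidean representation (Statement 2).
-/

open scoped ComplexOrder

noncomputable section

/-- The underlying space of the vacuum Itô algebra `𝔞(h,𝒜)`: quadruples
`(α, x, y, A)` with `α ∈ ℂ`, a ket `x ∈ h`, a bra `y ∈ h*` (a continuous linear
functional) and `A` in the *-subalgebra `𝒜 ⊆ B(h)`. -/
abbrev VacuumIto (H : Type*) [NormedAddCommGroup H] [InnerProductSpace ℂ H]
    [CompleteSpace H] (𝒜 : NonUnitalStarSubalgebra ℂ (H →L[ℂ] H)) :=
  ℂ × H × (H →L[ℂ] ℂ) × 𝒜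

variable {H : Type*} [NormedAddCommGroup H] [InnerProductSpace ℂ H] [CompleteSpace H]
  {𝒜 : NonUnitalStarSubalgebra ℂ (H →L[ℂ] H)}

/-- The product `(α₁,x₁,y₁,A₁)·(α₂,x₂,y₂,A₂) = (y₁(x₂), A₁x₂, y₁∘A₂, A₁A₂)`. -/
def vprod (a b : VacuumIto H 𝒜) : VacuumIto H 𝒜 :=
  ⟨a.2.2.1 b.2.1, (a.2.2.2 : H →L[ℂ] H) b.2.1,
    a.2.2.1.comp (b.2.2.2 : H →L[ℂ] H), a.2.2.2 * b.2.2.2⟩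

/-- The involution `(α,x,y,A)⋆ = (conj α, y♯, x♭, A†)`, where `y♯` is the Riesz
representative of the bra `y` and `x♭ = ⟨x|·⟩`. -/
def vstar (a : VacuumIto H 𝒜) : VacuumIto H 𝒜 :=
  ⟨starRingEnd ℂ a.1, (InnerProductSpace.toDual ℂ H).symm a.2.2.1,
    (InnerProductSpace.toDual ℂ H a.2.1 : H →L[ℂ] ℂ), star a.2.2.2⟩

/-- The death `θ = (1,0,0,0)`. -/
def vtheta : VacuumIto H 𝒜 := ⟨1, 0, 0, 0⟩

/-- The functional `l(α,x,y,A) = α`. -/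
def vl (a : VacuumIto H 𝒜) : ℂ := a.1

variable (H 𝒜)

/-- The pseudo-Euclidean space `𝒦 = ℂ ⊕ h ⊕ ℂ` (with its Hilbert `ℓ²`-structure). -/
abbrev PseudoSpace := WithLp 2 (ℂ × WithLp 2 (H × ℂ))

/-- First coordinate `γ` of `γ ⊕ u ⊕ δ`. -/
def prGamma : PseudoSpace H →L[ℂ] ℂ :=
  (ContinuousLinearMap.fst ℂ ℂ (WithLp 2 (H × ℂ))).comp
    (WithLp.prodContinuousLinearEquiv 2 ℂ ℂ (WithLp 2 (H × ℂ))).toContinuousLinearMap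

/-- Middle coordinate `u` of `γ ⊕ u ⊕ δ`. -/
def prU : PseudoSpace H →L[ℂ] H :=
  ((ContinuousLinearMap.fst ℂ H ℂ).comp
      (WithLp.prodContinuousLinearEquiv 2 ℂ H ℂ).toContinuousLinearMap).comp
    (((ContinuousLinearMap.snd ℂ ℂ (WithLp 2 (H × ℂ)))).comp
      (WithLp.prodContinuousLinearEquiv 2 ℂ ℂ (WithLp 2 (H × ℂ))).toContinuousLinearMap)

/-- Last coordinate `δ` of `γ ⊕ u ⊕ δ`. -/
def prDelta : PseudoSpace H →L[ℂ] ℂ :=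
  ((ContinuousLinearMap.snd ℂ H ℂ).comp
      (WithLp.prodContinuousLinearEquiv 2 ℂ H ℂ).toContinuousLinearMap).comp
    (((ContinuousLinearMap.snd ℂ ℂ (WithLp 2 (H × ℂ)))).comp
      (WithLp.prodContinuousLinearEquiv 2 ℂ ℂ (WithLp 2 (H × ℂ))).toContinuousLinearMap)

/-- Reassembling `(γ, u, δ)` into an element of `𝒦`. -/
def reassemble (f : PseudoSpace H →L[ℂ] ℂ) (g : PseudoSpace H →L[ℂ] H)
    (k : PseudoSpace H →L[ℂ] ℂ) : PseudoSpace H →L[ℂ] PseudoSpace H :=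
  ((WithLp.prodContinuousLinearEquiv 2 ℂ ℂ (WithLp 2 (H × ℂ))).symm.toContinuousLinearMap).comp
    (f.prod
      (((WithLp.prodContinuousLinearEquiv 2 ℂ H ℂ).symm.toContinuousLinearMap).comp (g.prod k)))

/-- The fundamental representation
`J(α,x,y,A)(γ ⊕ u ⊕ δ) = (y(u) + αδ) ⊕ (Au + δx) ⊕ 0`. -/
def Jrep (a : VacuumIto H 𝒜) : PseudoSpace H →L[ℂ] PseudoSpace H :=
  reassemble H (a.2.2.1.comp (prU H) + a.1 • prDelta H)
    (((a.2.2.2 : H →L[ℂ] H)).comp (prU H) + (prDelta H).smulRight a.2.1) 0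

/-- The pseudo-Euclidean metric (flip) `G(γ ⊕ u ⊕ δ) = δ ⊕ u ⊕ γ`. -/
def Gflip : PseudoSpace H →L[ℂ] PseudoSpace H :=
  reassemble H (prDelta H) (prU H) (prGamma H)


/-!
Writing `γ ⊕ u ⊕ δ` as a column, `J(α,x,y,A)` is the strictly upper triangular operator
matrix `[[0, y, α], [0, A, x], [0, 0, 0]]`. The product of two such matrices is the matrix of
`(y₁(x₂), A₁x₂, y₁∘A₂, A₁A₂)`, and conjugating the adjoint matrix by the flip `G` reflects it
in the anti-diagonal, which gives the matrix of `(conj α, y♯, x♭, A†)`.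
-/

namespace PseudoSpace

variable {H : Type*} [NormedAddCommGroup H] [InnerProductSpace ℂ H]

def mk (γ : ℂ) (u : H) (δ : ℂ) : PseudoSpace H :=
  WithLp.toLp 2 (γ, WithLp.toLp 2 (u, δ))

@[simp] lemma prGamma_mk (γ : ℂ) (u : H) (δ : ℂ) : prGamma H (mk γ u δ) = γ := rfl
@[simp] lemma prU_mk (γ : ℂ) (u : H) (δ : ℂ) : prU H (mk γ u δ) = u := rfl
@[simp] lemma prDelta_mk (γ : ℂ) (u : H) (δ : ℂ) : prDelta H (mk γ u δ) = δ := rfl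

lemma mk_coords (v : PseudoSpace H) : mk (prGamma H v) (prU H v) (prDelta H v) = v := rfl

lemma ext {v w : PseudoSpace H} (hγ : prGamma H v = prGamma H w) (hu : prU H v = prU H w)
    (hδ : prDelta H v = prDelta H w) : v = w := by
  rw [← mk_coords v, ← mk_coords w, hγ, hu, hδ]

@[simp] lemma mk_inj {γ γ' δ δ' : ℂ} {u u' : H} :
    mk γ u δ = mk γ' u' δ' ↔ γ = γ' ∧ u = u' ∧ δ = δ' := by
  refine ⟨fun h => ⟨congr(prGamma H $h), congr(prU H $h), congr(prDelta H $h)⟩, ?_⟩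
  rintro ⟨rfl, rfl, rfl⟩
  rfl

lemma inner_eq (v w : PseudoSpace H) :
    inner ℂ v w = starRingEnd ℂ (prGamma H v) * prGamma H w + inner ℂ (prU H v) (prU H w)
      + starRingEnd ℂ (prDelta H v) * prDelta H w := by
  conv_lhs => rw [← mk_coords v, ← mk_coords w]
  simp only [mk, WithLp.prod_inner_apply, RCLike.inner_apply]
  ring

end PseudoSpace

open PseudoSpace
open scoped InnerProduct

section Gflip

variable {H : Type*} [NormedAddCommGroup H] [InnerProductSpace ℂ H]

@[simp] lemma prGamma_Gflip (v : PseudoSpace H) : prGamma H (Gflip H v) = prDelta H v := rfl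
@[simp] lemma prU_Gflip (v : PseudoSpace H) : prU H (Gflip H v) = prU H v := rfl
@[simp] lemma prDelta_Gflip (v : PseudoSpace H) : prDelta H (Gflip H v) = prGamma H v := rfl

@[simp] lemma Gflip_Gflip (v : PseudoSpace H) : Gflip H (Gflip H v) = v := rfl

end Gflip

section Jrep

variable {H 𝒜}

@[simp] lemma prGamma_Jrep (a : VacuumIto H 𝒜) (v : PseudoSpace H) :
    prGamma H (Jrep H 𝒜 a v) = a.2.2.1 (prU H v) + a.1 * prDelta H v := rfl

@[simp] lemma prU_Jrep (a : VacuumIto H 𝒜) (v : PseudoSpace H) :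
    prU H (Jrep H 𝒜 a v) = (a.2.2.2 : H →L[ℂ] H) (prU H v) + prDelta H v • a.2.1 := rfl

@[simp] lemma prDelta_Jrep (a : VacuumIto H 𝒜) (v : PseudoSpace H) :
    prDelta H (Jrep H 𝒜 a v) = 0 := rfl

lemma Jrep_mk (a : VacuumIto H 𝒜) (γ : ℂ) (u : H) (δ : ℂ) :
    Jrep H 𝒜 a (mk γ u δ) = mk (a.2.2.1 u + a.1 * δ) ((a.2.2.2 : H →L[ℂ] H) u + δ • a.2.1) 0 :=
  rfl

theorem Jrep_injective : Function.Injective (Jrep H 𝒜) := by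
  rintro ⟨α, x, y, A⟩ ⟨α', x', y', A'⟩ h
  have hδ := congr($h (mk 0 0 1))
  have hu (u : H) := congr($h (mk 0 u 0))
  simp only [Jrep_mk, mk_inj, map_zero, mul_one, zero_add, one_smul, zero_smul, add_zero,
    mul_zero, and_true] at hδ hu
  obtain ⟨rfl, rfl⟩ := hδ
  have hy : y = y' := ContinuousLinearMap.ext fun u => (hu u).1
  have hA : A = A' := Subtype.ext <| ContinuousLinearMap.ext fun u => (hu u).2
  rw [hy, hA]

theorem Jrep_add (a b : VacuumIto H 𝒜) : Jrep H 𝒜 (a + b) = Jrep H 𝒜 a + Jrep H 𝒜 b := by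
  refine ContinuousLinearMap.ext fun v => PseudoSpace.ext ?_ ?_ ?_ <;>
    simp only [Prod.fst_add, Prod.snd_add, prGamma_Jrep, prU_Jrep, prDelta_Jrep,
      add_apply, NonUnitalStarSubalgebra.coe_add, map_add]
  · ring
  · module
  · ring

theorem Jrep_smul (c : ℂ) (a : VacuumIto H 𝒜) : Jrep H 𝒜 (c • a) = c • Jrep H 𝒜 a := by
  refine ContinuousLinearMap.ext fun v => PseudoSpace.ext ?_ ?_ ?_ <;>
    simp only [Prod.smul_fst, Prod.smul_snd, prGamma_Jrep, prU_Jrep, prDelta_Jrep,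
      smul_apply, NonUnitalStarSubalgebra.coe_smul, map_smul, smul_eq_mul]
  · ring
  · module
  · ring

theorem Jrep_vprod (a b : VacuumIto H 𝒜) :
    Jrep H 𝒜 (vprod a b) = Jrep H 𝒜 a ∘L Jrep H 𝒜 b := by
  refine ContinuousLinearMap.ext fun v => PseudoSpace.ext ?_ ?_ ?_ <;>
    simp only [vprod, prGamma_Jrep, prU_Jrep, prDelta_Jrep, ContinuousLinearMap.comp_apply,
      NonUnitalStarSubalgebra.coe_mul, mul_apply_eq_comp, map_add, map_smul]
  · ring
  · module

lemma coe_star_eq_adjoint (A : 𝒜) : ((star A : 𝒜) : H →L[ℂ] H) = (A : H →L[ℂ] H)† := rfl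

theorem adjoint_Jrep (a : VacuumIto H 𝒜) :
    (Jrep H 𝒜 a)† = Gflip H ∘L Jrep H 𝒜 (vstar a) ∘L Gflip H := by
  refine ((ContinuousLinearMap.eq_adjoint_iff _ _).2 fun v w => ?_).symm
  simp only [ContinuousLinearMap.comp_apply, PseudoSpace.inner_eq, prGamma_Jrep, prU_Jrep,
    prDelta_Jrep, prGamma_Gflip, prU_Gflip, prDelta_Gflip, vstar, coe_star_eq_adjoint,
    ContinuousLinearMap.adjoint_inner_left, InnerProductSpace.toDual_symm_apply,
    InnerProductSpace.toDual_apply_apply, inner_add_left, inner_add_right, inner_smul_left,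
    inner_smul_right, map_add, map_mul, map_zero, zero_mul, zero_add, Complex.conj_conj,
    inner_conj_symm]
  ring

theorem Jrep_vstar (a : VacuumIto H 𝒜) :
    Jrep H 𝒜 (vstar a) = Gflip H ∘L (Jrep H 𝒜 a)† ∘L Gflip H := by
  ext v : 1
  simp only [adjoint_Jrep, ContinuousLinearMap.comp_apply, Gflip_Gflip]

end Jrep

/-- `J` is an injective linear multiplicative map and the
involution of the vacuum Itô algebra is implemented by the pseudo-Euclidean
metric `G`: `J(a⋆) = G ∘ J(a)† ∘ G`. -/
theorem vacuumIto_fundamental_representation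
    (H : Type*) [NormedAddCommGroup H] [InnerProductSpace ℂ H] [CompleteSpace H]
    (𝒜 : NonUnitalStarSubalgebra ℂ (H →L[ℂ] H)) :
    Function.Injective (Jrep H 𝒜) ∧
    IsLinearMap ℂ (Jrep H 𝒜) ∧
    (∀ a b : VacuumIto H 𝒜, Jrep H 𝒜 (vprod a b) = (Jrep H 𝒜 a).comp (Jrep H 𝒜 b)) ∧
    (∀ a : VacuumIto H 𝒜,
      Jrep H 𝒜 (vstar a)
        = (Gflip H).comp ((ContinuousLinearMap.adjoint (Jrep H 𝒜 a)).comp (Gflip H))) :=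
  ⟨Jrep_injective, ⟨Jrep_add, Jrep_smul⟩, Jrep_vprod, Jrep_vstar⟩

end
end

section
/- (Theorem 1, vacuum decomposition.) Let P be the orthogonal projection of h onto N = {x ∈ h : Ax = 0 for all A ∈ 𝒜} and Q = I − P. Define the Brownian part 𝔟 = {(0, u, v, 0) : u ∈ Ph, v = v∘P} and the Lévy part 𝔠 = {(0, u, v, A) : u ∈ Qh, v = v∘Q, A ∈ 𝒜}. Then: (i) every a = (α, x, y, A) ∈ 𝔞(h,𝒜) decomposes uniquely as a = αθ + b + c with b = (0, Px, y∘P, 0) ∈ 𝔟 and c = (0, Qx, y∘Q, A) ∈ 𝔠; (ii) 𝔟 and 𝔠 are ⋆-invariant subalgebras with bc = 0 and cb = 0 for all b ∈ 𝔟, c ∈ 𝔠; (iii) the product of any two elements of 𝔟 lies in ℂθ. -/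
/-!
`P` is a self-adjoint idempotent, and every `A ∈ 𝒜` satisfies `A P = 0`; since `𝒜` is closed under
adjoints, also `P A = (A† P)† = 0`, so `A` maps into `Qh` and `Q A = A = A Q`. With `PQ = QP = 0`
all claims become componentwise identities. In particular the maps
`a ↦ (0, Px, y∘P, 0)` and `a ↦ (0, Qx, y∘Q, A)` are linear, fix `𝔟` resp. `𝔠`, and kill `θ` and the
other part; applying them to `a = α'θ + b' + c'` gives uniqueness.
-/

open scoped ComplexOrder

noncomputable section

variable {H : Type*} [NormedAddCommGroup H] [InnerProductSpace ℂ H] [CompleteSpace H]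
  {𝒜 : NonUnitalStarSubalgebra ℂ (H →L[ℂ] H)}

theorem isStarProjection_of_mem_of_sub_mem_orthogonal {𝕜 E : Type*} [RCLike 𝕜]
    [NormedAddCommGroup E] [InnerProductSpace 𝕜 E] [CompleteSpace E]
    {K : Submodule 𝕜 E} {p : E →L[𝕜] E} (hmem : ∀ x, p x ∈ K) (horth : ∀ x, x - p x ∈ Kᗮ) :
    IsStarProjection p := by
  have hfix : ∀ x ∈ K, p x = x := fun x hx => by
    have : x - p x ∈ K ⊓ Kᗮ := ⟨K.sub_mem hx (hmem x), horth x⟩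
    rw [K.inf_orthogonal_eq_bot, Submodule.mem_bot, sub_eq_zero] at this
    exact this.symm
  have hsymm : ∀ x y, inner 𝕜 (p x) y = inner 𝕜 x (p y) := fun x y => by
    have h₁ := K.inner_right_of_mem_orthogonal (hmem x) (horth y)
    have h₂ := K.inner_left_of_mem_orthogonal (hmem y) (horth x)
    rw [inner_sub_right, sub_eq_zero] at h₁
    rw [inner_sub_left, sub_eq_zero] at h₂
    rw [h₁, h₂]
  exact ⟨ContinuousLinearMap.ext fun x => hfix _ (hmem x),
    ContinuousLinearMap.isSelfAdjoint_iff_isSymmetric.mpr hsymm⟩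

theorem IsSelfAdjoint.mul_eq_zero_of_star_mul_eq_zero {R : Type*} [NonUnitalNonAssocSemiring R]
    [StarRing R] {p a : R} (hp : IsSelfAdjoint p) (h : star a * p = 0) : p * a = 0 := by
  simpa [hp.star_eq] using congrArg star h

variable {p q : H →L[ℂ] H}

def levyPart (q : H →L[ℂ] H) : Submodule ℂ (VacuumIto H 𝒜) where
  carrier := {a | a.1 = 0 ∧ q a.2.1 = a.2.1 ∧ a.2.2.1.comp q = a.2.2.1}
  add_mem' := by
    rintro a b ⟨ha₁, ha₂, ha₃⟩ ⟨hb₁, hb₂, hb₃⟩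
    exact ⟨by simp [ha₁, hb₁], by simp [ha₂, hb₂], by simp [ContinuousLinearMap.add_comp, ha₃, hb₃]⟩
  zero_mem' := by simp
  smul_mem' := by
    rintro γ a ⟨ha₁, ha₂, ha₃⟩
    exact ⟨by simp [ha₁], by simp [ha₂], by simp [ha₃]⟩

def brownianPart (p : H →L[ℂ] H) : Submodule ℂ (VacuumIto H 𝒜) where
  carrier := {a | a.1 = 0 ∧ p a.2.1 = a.2.1 ∧ a.2.2.1.comp p = a.2.2.1 ∧ a.2.2.2 = 0}
  add_mem' := by
    rintro a b ⟨ha₁, ha₂, ha₃, ha₄⟩ ⟨hb₁, hb₂, hb₃, hb₄⟩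
    exact ⟨by simp [ha₁, hb₁], by simp [ha₂, hb₂],
      by simp [ContinuousLinearMap.add_comp, ha₃, hb₃], by simp [ha₄, hb₄]⟩
  zero_mem' := by simp
  smul_mem' := by
    rintro γ a ⟨ha₁, ha₂, ha₃, ha₄⟩
    refine ⟨by simp [ha₁], by simp [ha₂], by simp [ha₃], ?_⟩
    rw [Prod.smul_snd, Prod.smul_snd, Prod.smul_snd, ha₄]
    -- `smul_zero` is applied in `H →L[ℂ] H` rather than in `𝒜`, where instance search times out.
    exact Subtype.ext (smul_zero γ)

theorem mem_levyPart_of_mem_brownianPart {b : VacuumIto H 𝒜} (hb : b ∈ brownianPart p) :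
    b ∈ levyPart p :=
  ⟨hb.1, hb.2.1, hb.2.2.1⟩

theorem vstar_mem_levyPart (hq : IsSelfAdjoint q) {c : VacuumIto H 𝒜} (hc : c ∈ levyPart q) :
    vstar c ∈ levyPart q := by
  obtain ⟨hc₁, hc₂, hc₃⟩ := hc
  have hsymm : ∀ x y, inner ℂ (q x) y = inner ℂ x (q y) :=
    ContinuousLinearMap.isSelfAdjoint_iff_isSymmetric.mp hq
  refine ⟨by simp [vstar, hc₁], ext_inner_right ℂ fun z => ?_, ContinuousLinearMap.ext fun z => ?_⟩
  · dsimp only [vstar]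
    rw [hsymm, InnerProductSpace.toDual_symm_apply, InnerProductSpace.toDual_symm_apply]
    exact DFunLike.congr_fun hc₃ z
  · dsimp only [vstar]
    rw [ContinuousLinearMap.comp_apply, InnerProductSpace.toDual_apply_apply,
      InnerProductSpace.toDual_apply_apply, ← hsymm, hc₂]

theorem vstar_mem_brownianPart (hp : IsSelfAdjoint p) {b : VacuumIto H 𝒜}
    (hb : b ∈ brownianPart p) : vstar b ∈ brownianPart p := by
  obtain ⟨h₁, h₂, h₃⟩ := vstar_mem_levyPart hp (mem_levyPart_of_mem_brownianPart hb)
  exact ⟨h₁, h₂, h₃, by simp [vstar, hb.2.2.2]⟩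

theorem smul_vtheta (γ : ℂ) : γ • (vtheta : VacuumIto H 𝒜) = (γ, 0, 0, 0) :=
  Prod.ext (mul_one γ) <| Prod.ext (smul_zero γ) <|
    Prod.ext (smul_zero (A := H →L[ℂ] ℂ) γ) (Subtype.ext (smul_zero γ))

theorem vprod_sub_vl_smul_vtheta (a b : VacuumIto H 𝒜) :
    vprod a b - vl (vprod a b) • vtheta =
      ((0 : ℂ), (a.2.2.2 : H →L[ℂ] H) b.2.1, a.2.2.1.comp (b.2.2.2 : H →L[ℂ] H),
        a.2.2.2 * b.2.2.2) := by
  simp [vprod, vl, smul_vtheta]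

theorem vprod_sub_vl_smul_vtheta_mem_levyPart (hqA : ∀ A ∈ 𝒜, q * A = A)
    (hAq : ∀ A ∈ 𝒜, A * q = A) (c c' : VacuumIto H 𝒜) :
    vprod c c' - vl (vprod c c') • vtheta ∈ levyPart q := by
  rw [vprod_sub_vl_smul_vtheta]
  refine ⟨rfl, ?_, ?_⟩
  · exact DFunLike.congr_fun (hqA _ c.2.2.2.2) _
  · rw [ContinuousLinearMap.comp_assoc]
    exact congrArg c.2.2.1.comp (hAq _ c'.2.2.2.2)

theorem vprod_eq_zero_of_mem_brownianPart_of_mem_levyPart (hpq : p * q = 0)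
    (hpA : ∀ A ∈ 𝒜, p * A = 0) {b c : VacuumIto H 𝒜} (hb : b ∈ brownianPart p)
    (hc : c ∈ levyPart q) : vprod b c = 0 := by
  obtain ⟨-, -, hb₃, hb₄⟩ := hb
  obtain ⟨-, hc₂, -⟩ := hc
  refine Prod.ext ?_ (Prod.ext ?_ (Prod.ext ?_ ?_))
  · change b.2.2.1 c.2.1 = 0
    rw [← hb₃, ← hc₂, ContinuousLinearMap.comp_apply, ← mul_apply_eq_comp, hpq,
      zero_apply, map_zero]
  · change (b.2.2.2 : H →L[ℂ] H) c.2.1 = 0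
    rw [hb₄]
    rfl
  · change b.2.2.1.comp (c.2.2.2 : H →L[ℂ] H) = 0
    rw [← hb₃, ContinuousLinearMap.comp_assoc, ← ContinuousLinearMap.mul_def, hpA _ c.2.2.2.2,
      ContinuousLinearMap.comp_zero]
  · change b.2.2.2 * c.2.2.2 = 0
    rw [hb₄, zero_mul]

theorem vprod_eq_zero_of_mem_levyPart_of_mem_brownianPart (hqp : q * p = 0)
    (hAp : ∀ A ∈ 𝒜, A * p = 0) {c b : VacuumIto H 𝒜} (hc : c ∈ levyPart q)
    (hb : b ∈ brownianPart p) : vprod c b = 0 := by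
  obtain ⟨-, hb₂, -, hb₄⟩ := hb
  obtain ⟨-, -, hc₃⟩ := hc
  refine Prod.ext ?_ (Prod.ext ?_ (Prod.ext ?_ ?_))
  · change c.2.2.1 b.2.1 = 0
    rw [← hc₃, ← hb₂, ContinuousLinearMap.comp_apply, ← mul_apply_eq_comp, hqp,
      zero_apply, map_zero]
  · change (c.2.2.2 : H →L[ℂ] H) b.2.1 = 0
    rw [← hb₂, ← mul_apply_eq_comp, hAp _ c.2.2.2.2, zero_apply]
  · change c.2.2.1.comp (b.2.2.2 : H →L[ℂ] H) = 0
    rw [hb₄, ZeroMemClass.coe_zero, ContinuousLinearMap.comp_zero]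
  · change c.2.2.2 * b.2.2.2 = 0
    rw [hb₄, mul_zero]

theorem vprod_eq_smul_vtheta_of_mem_brownianPart {b b' : VacuumIto H 𝒜}
    (hb : b ∈ brownianPart p) (hb' : b' ∈ brownianPart p) :
    vprod b b' = b.2.2.1 b'.2.1 • vtheta := by
  simp [vprod, smul_vtheta, hb.2.2.2, hb'.2.2.2]

def brownianProj (p : H →L[ℂ] H) : VacuumIto H 𝒜 →ₗ[ℂ] VacuumIto H 𝒜 where
  toFun a := (0, p a.2.1, a.2.2.1.comp p, 0)
  map_add' _ _ := Prod.ext (add_zero 0).symm <| Prod.ext (map_add p _ _) <|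
    Prod.ext (ContinuousLinearMap.add_comp _ _ _) (add_zero 0).symm
  map_smul' γ _ := Prod.ext (smul_zero γ).symm <| Prod.ext (map_smul p γ _) <|
    Prod.ext (ContinuousLinearMap.smul_comp _ _ _) (Subtype.ext (smul_zero γ).symm)

def levyProj (q : H →L[ℂ] H) : VacuumIto H 𝒜 →ₗ[ℂ] VacuumIto H 𝒜 where
  toFun a := (0, q a.2.1, a.2.2.1.comp q, a.2.2.2)
  map_add' _ _ := Prod.ext (add_zero 0).symm <| Prod.ext (map_add q _ _) <|
    Prod.ext (ContinuousLinearMap.add_comp _ _ _) rfl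
  map_smul' γ _ := Prod.ext (smul_zero γ).symm <| Prod.ext (map_smul q γ _) <|
    Prod.ext (ContinuousLinearMap.smul_comp _ _ _) rfl

theorem brownianProj_mem (hp : IsIdempotentElem p) (a : VacuumIto H 𝒜) :
    brownianProj p a ∈ brownianPart p :=
  ⟨rfl, DFunLike.congr_fun hp a.2.1, by
    change (a.2.2.1.comp p).comp p = a.2.2.1.comp p
    rw [ContinuousLinearMap.comp_assoc, ← ContinuousLinearMap.mul_def, hp], rfl⟩

theorem levyProj_mem (hq : IsIdempotentElem q) (a : VacuumIto H 𝒜) :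
    levyProj q a ∈ levyPart q :=
  ⟨rfl, DFunLike.congr_fun hq a.2.1, by
    change (a.2.2.1.comp q).comp q = a.2.2.1.comp q
    rw [ContinuousLinearMap.comp_assoc, ← ContinuousLinearMap.mul_def, hq]⟩

theorem smul_vtheta_add_brownianProj_add_levyProj (hpq : p + q = 1) (a : VacuumIto H 𝒜) :
    a.1 • vtheta + brownianProj p a + levyProj q a = a := by
  rw [smul_vtheta]
  refine Prod.ext ?_ <| Prod.ext ?_ <| Prod.ext ?_ ?_
  · change a.1 + 0 + 0 = a.1
    rw [add_zero, add_zero]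
  · change 0 + p a.2.1 + q a.2.1 = a.2.1
    rw [zero_add]
    exact DFunLike.congr_fun hpq a.2.1
  · change 0 + a.2.2.1.comp p + a.2.2.1.comp q = a.2.2.1
    rw [zero_add, ← ContinuousLinearMap.comp_add, hpq, ContinuousLinearMap.one_def,
      ContinuousLinearMap.comp_id]
  · change 0 + 0 + a.2.2.2 = a.2.2.2
    rw [zero_add, zero_add]

theorem brownianProj_smul_vtheta (α : ℂ) : brownianProj p (α • vtheta : VacuumIto H 𝒜) = 0 := by
  rw [smul_vtheta]
  exact Prod.ext rfl <| Prod.ext (map_zero p) <| Prod.ext (ContinuousLinearMap.zero_comp p) rfl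

theorem levyProj_smul_vtheta (α : ℂ) : levyProj q (α • vtheta : VacuumIto H 𝒜) = 0 := by
  rw [smul_vtheta]
  exact Prod.ext rfl <| Prod.ext (map_zero q) <| Prod.ext (ContinuousLinearMap.zero_comp q) rfl

theorem brownianProj_eq_self {b : VacuumIto H 𝒜} (hb : b ∈ brownianPart p) :
    brownianProj p b = b := by
  obtain ⟨hb₁, hb₂, hb₃, hb₄⟩ := hb
  exact Prod.ext hb₁.symm <| Prod.ext hb₂ <| Prod.ext hb₃ hb₄.symm

theorem levyProj_eq_self {c : VacuumIto H 𝒜} (hc : c ∈ levyPart q) : levyProj q c = c := by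
  obtain ⟨hc₁, hc₂, hc₃⟩ := hc
  exact Prod.ext hc₁.symm <| Prod.ext hc₂ <| Prod.ext hc₃ rfl

theorem brownianProj_eq_zero_of_mem_levyPart (hpq : p * q = 0) (hqp : q * p = 0)
    {c : VacuumIto H 𝒜} (hc : c ∈ levyPart q) : brownianProj p c = 0 := by
  obtain ⟨-, hc₂, hc₃⟩ := hc
  refine Prod.ext rfl <| Prod.ext ?_ <| Prod.ext ?_ rfl
  · change p c.2.1 = 0
    rw [← hc₂, ← mul_apply_eq_comp, hpq, zero_apply]
  · change c.2.2.1.comp p = 0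
    rw [← hc₃, ContinuousLinearMap.comp_assoc, ← ContinuousLinearMap.mul_def, hqp,
      ContinuousLinearMap.comp_zero]

theorem levyProj_eq_zero_of_mem_brownianPart (hpq : p * q = 0) (hqp : q * p = 0)
    {b : VacuumIto H 𝒜} (hb : b ∈ brownianPart p) : levyProj q b = 0 := by
  obtain ⟨-, hb₂, hb₃, hb₄⟩ := hb
  refine Prod.ext rfl <| Prod.ext ?_ <| Prod.ext ?_ hb₄
  · change q b.2.1 = 0
    rw [← hb₂, ← mul_apply_eq_comp, hqp, zero_apply]
  · change b.2.2.1.comp q = 0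
    rw [← hb₃, ContinuousLinearMap.comp_assoc, ← ContinuousLinearMap.mul_def, hpq,
      ContinuousLinearMap.comp_zero]

theorem eq_components_of_eq_smul_vtheta_add_add (hpq : p * q = 0) (hqp : q * p = 0)
    {α : ℂ} {a b c : VacuumIto H 𝒜} (hb : b ∈ brownianPart p) (hc : c ∈ levyPart q)
    (ha : a = α • vtheta + b + c) : α = a.1 ∧ b = brownianProj p a ∧ c = levyProj q a := by
  subst ha
  refine ⟨?_, ?_, ?_⟩
  · rw [Prod.fst_add, Prod.fst_add, smul_vtheta, hb.1, hc.1, add_zero, add_zero]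
  · rw [map_add, map_add, brownianProj_smul_vtheta, brownianProj_eq_self hb,
      brownianProj_eq_zero_of_mem_levyPart hpq hqp hc, zero_add, add_zero]
  · rw [map_add, map_add, levyProj_smul_vtheta, levyProj_eq_self hc,
      levyProj_eq_zero_of_mem_brownianPart hpq hqp hb, zero_add, zero_add]

variable (H 𝒜)

/-- **Theorem 1, vacuum decomposition.** With `P` the orthogonal
projection onto `N = {x : Ax = 0 ∀ A ∈ 𝒜}` and `Q = I - P`, the Brownian part
`𝔟 = {(0,u,v,0) : u ∈ Ph, v = v∘P}` and the Lévy part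
`𝔠 = {(0,u,v,A) : u ∈ Qh, v = v∘Q, A ∈ 𝒜}` give a unique orthogonal
decomposition `a = αθ + b + c`; `𝔟` and `𝔠` are ⋆-invariant subalgebras (modulo
the death `θ`) with `bc = 0 = cb`, and products of two elements of `𝔟` lie in `ℂθ`. -/
theorem vacuumIto_decomposition
    (H : Type*) [NormedAddCommGroup H] [InnerProductSpace ℂ H] [CompleteSpace H]
    (𝒜 : NonUnitalStarSubalgebra ℂ (H →L[ℂ] H))
    (N : Submodule ℂ H) (hN : ∀ x : H, x ∈ N ↔ ∀ A ∈ 𝒜, A x = 0)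
    (P : H →L[ℂ] H) (hPmem : ∀ x : H, P x ∈ N) (hPorth : ∀ x : H, x - P x ∈ Nᗮ)
    (Q : H →L[ℂ] H) (hQ : Q = ContinuousLinearMap.id ℂ H - P)
    (𝔟 : Set (VacuumIto H 𝒜))
    (h𝔟 : 𝔟 = {a : VacuumIto H 𝒜 |
      a.1 = 0 ∧ P a.2.1 = a.2.1 ∧ a.2.2.1.comp P = a.2.2.1 ∧ a.2.2.2 = 0})
    (𝔠 : Set (VacuumIto H 𝒜))
    (h𝔠 : 𝔠 = {a : VacuumIto H 𝒜 |
      a.1 = 0 ∧ Q a.2.1 = a.2.1 ∧ a.2.2.1.comp Q = a.2.2.1}) :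
    -- (i) existence and uniqueness of the decomposition a = αθ + b + c
    (∀ a : VacuumIto H 𝒜,
      ((0 : ℂ), P a.2.1, a.2.2.1.comp P, (0 : 𝒜)) ∈ 𝔟 ∧
      ((0 : ℂ), Q a.2.1, a.2.2.1.comp Q, a.2.2.2) ∈ 𝔠 ∧
      a = a.1 • vtheta + ((0 : ℂ), P a.2.1, a.2.2.1.comp P, (0 : 𝒜))
            + ((0 : ℂ), Q a.2.1, a.2.2.1.comp Q, a.2.2.2) ∧
      (∀ (α' : ℂ) (b' c' : VacuumIto H 𝒜), b' ∈ 𝔟 → c' ∈ 𝔠 →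
        a = α' • vtheta + b' + c' →
        α' = a.1 ∧ b' = ((0 : ℂ), P a.2.1, a.2.2.1.comp P, (0 : 𝒜))
          ∧ c' = ((0 : ℂ), Q a.2.1, a.2.2.1.comp Q, a.2.2.2))) ∧
    -- (ii) 𝔟 and 𝔠 are ⋆-invariant subspaces, multiplicatively closed modulo ℂθ,
    -- and mutually annihilating
    (∀ b ∈ 𝔟, vstar b ∈ 𝔟) ∧ (∀ c ∈ 𝔠, vstar c ∈ 𝔠) ∧
    (∀ b b' : VacuumIto H 𝒜, b ∈ 𝔟 → b' ∈ 𝔟 → b + b' ∈ 𝔟) ∧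
    (∀ (γ : ℂ) (b : VacuumIto H 𝒜), b ∈ 𝔟 → γ • b ∈ 𝔟) ∧
    (∀ c c' : VacuumIto H 𝒜, c ∈ 𝔠 → c' ∈ 𝔠 → c + c' ∈ 𝔠) ∧
    (∀ (γ : ℂ) (c : VacuumIto H 𝒜), c ∈ 𝔠 → γ • c ∈ 𝔠) ∧
    (∀ c c' : VacuumIto H 𝒜, c ∈ 𝔠 → c' ∈ 𝔠 →
      vprod c c' - (vl (vprod c c')) • vtheta ∈ 𝔠) ∧
    (∀ b ∈ 𝔟, ∀ c ∈ 𝔠, vprod b c = 0 ∧ vprod c b = 0) ∧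
    -- (iii) products of two elements of 𝔟 lie in ℂθ
    (∀ b b' : VacuumIto H 𝒜, b ∈ 𝔟 → b' ∈ 𝔟 →
      ∃ γ : ℂ, vprod b b' = γ • vtheta) := by
  subst hQ h𝔟 h𝔠
  have hP : IsStarProjection P := isStarProjection_of_mem_of_sub_mem_orthogonal hPmem hPorth
  have hQ : IsStarProjection (1 - P) := hP.one_sub
  have hPQ : P * (1 - P) = 0 := hP.mul_one_sub_self
  have hQP : (1 - P) * P = 0 := hP.one_sub_mul_self
  have hAP : ∀ A ∈ 𝒜, A * P = 0 := fun A hA =>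
    ContinuousLinearMap.ext fun x => (hN _).1 (hPmem x) A hA
  have hPA : ∀ A ∈ 𝒜, P * A = 0 := fun A hA =>
    hP.isSelfAdjoint.mul_eq_zero_of_star_mul_eq_zero (hAP _ (star_mem hA))
  have hQA : ∀ A ∈ 𝒜, (1 - P) * A = A := fun A hA => by rw [sub_mul, one_mul, hPA A hA, sub_zero]
  have hAQ : ∀ A ∈ 𝒜, A * (1 - P) = A := fun A hA => by rw [mul_sub, mul_one, hAP A hA, sub_zero]
  refine ⟨fun a => ⟨brownianProj_mem hP.isIdempotentElem a, levyProj_mem hQ.isIdempotentElem a,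
      (smul_vtheta_add_brownianProj_add_levyProj (add_sub_cancel P 1) a).symm,
      fun α' b' c' hb hc ha => eq_components_of_eq_smul_vtheta_add_add hPQ hQP hb hc ha⟩,
    fun b hb => vstar_mem_brownianPart hP.isSelfAdjoint hb,
    fun c hc => vstar_mem_levyPart hQ.isSelfAdjoint hc,
    fun b b' => (brownianPart P).add_mem, fun γ b hb => (brownianPart P).smul_mem γ hb,
    fun c c' => (levyPart (1 - P)).add_mem, fun γ c hc => (levyPart (1 - P)).smul_mem γ hc,
    fun c c' _ _ => vprod_sub_vl_smul_vtheta_mem_levyPart hQA hAQ c c',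
    fun b hb c hc => ⟨vprod_eq_zero_of_mem_brownianPart_of_mem_levyPart hPQ hPA hb hc,
      vprod_eq_zero_of_mem_levyPart_of_mem_brownianPart hQP hAP hc hb⟩,
    fun b b' hb hb' => ⟨_, vprod_eq_smul_vtheta_of_mem_brownianPart hb hb'⟩⟩
end
end

section
/- If for some ξ ∈ D the left multiplication operator L_ξ : ζ ↦ ξζ is bounded with respect to ‖·‖₊, then the right multiplication operator R_ξ : η ↦ ηξ is bounded with respect to ‖·‖⁻ with the same operator norm: sup{‖ξζ‖₊ : ζ ∈ D, ‖ζ‖₊ ≤ 1} = sup{‖ηξ‖⁻ : η ∈ D, ‖η‖⁻ ≤ 1}. -/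
/-!
With respect to `⟨·|·⟩₊`, `D` is a pre-Hilbert space in which, by the first Tomita relation,
left multiplication by `ξ⋆` is the formal adjoint of left multiplication by `ξ`. A formal
adjoint `S` of a bounded operator `T` is bounded by the same constant, because
`‖S x‖² = Re ⟨x | T S x⟩ ≤ ‖x‖ ‖T‖ ‖S x‖`; applying this in both directions gives `‖L_ξ‖ = ‖L_{ξ⋆}‖`.
Finally `(η ξ)⋆ = ξ⋆ η⋆`, so `⋆` turns `R_ξ` on `(D, ‖·‖⁻)` into `L_{ξ⋆}` on `(D, ‖·‖₊)`.
-/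

noncomputable section

/-- The right norm `‖ξ‖⁻` is `pnorm innp (star ξ)`. -/
def pnorm {D : Type*} (innp : D → D → ℂ) (ξ : D) : ℝ := Real.sqrt (innp ξ ξ).re

open scoped InnerProductSpace

section FormalAdjoint

variable {𝕜 E F : Type*} [RCLike 𝕜] [SeminormedAddCommGroup E] [InnerProductSpace 𝕜 E]
  [SeminormedAddCommGroup F] [InnerProductSpace 𝕜 F]

theorem norm_apply_le_of_inner_map_eq {S : E → F} {T : F → E} {C : ℝ} (hC : 0 ≤ C)
    (hST : ∀ x y, ⟪S x, y⟫_𝕜 = ⟪x, T y⟫_𝕜) (hT : ∀ y, ‖T y‖ ≤ C * ‖y‖) (x : E) :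
    ‖S x‖ ≤ C * ‖x‖ := by
  have key : ‖S x‖ * ‖S x‖ ≤ C * ‖x‖ * ‖S x‖ :=
    calc ‖S x‖ * ‖S x‖ = RCLike.re ⟪S x, S x⟫_𝕜 := (inner_self_eq_norm_mul_norm _).symm
      _ = RCLike.re ⟪x, T (S x)⟫_𝕜 := by rw [hST]
      _ ≤ ‖⟪x, T (S x)⟫_𝕜‖ := RCLike.re_le_norm _
      _ ≤ ‖x‖ * ‖T (S x)‖ := norm_inner_le_norm _ _
      _ ≤ ‖x‖ * (C * ‖S x‖) := by gcongr; exact hT _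
      _ = C * ‖x‖ * ‖S x‖ := by ring
  rcases (norm_nonneg (S x)).eq_or_lt with h | h
  · rw [← h]; positivity
  · exact le_of_mul_le_mul_right key h

theorem ContinuousLinearMap.opNorm_le_of_inner_map_eq (S : E →L[𝕜] F) (T : F →L[𝕜] E)
    (hST : ∀ x y, ⟪S x, y⟫_𝕜 = ⟪x, T y⟫_𝕜) : ‖S‖ ≤ ‖T‖ :=
  S.opNorm_le_bound T.opNorm_nonneg
    (norm_apply_le_of_inner_map_eq T.opNorm_nonneg hST T.le_opNorm)

end FormalAdjoint

theorem ContinuousLinearMap.sSup_norm_apply_of_norm_le_one_eq_opNorm {𝕜 E F : Type*}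
    [DenselyNormedField 𝕜] [NormedAddCommGroup E] [NormedSpace 𝕜 E]
    [SeminormedAddCommGroup F] [NormedSpace 𝕜 F] (f : E →L[𝕜] F) :
    sSup {r : ℝ | ∃ x, ‖x‖ ≤ 1 ∧ r = ‖f x‖} = ‖f‖ := by
  rw [← f.sSup_unitClosedBall_eq_norm]
  congr 1
  ext r
  simp [eq_comm]

theorem tomita_left_bounded_iff_right_bounded_general
    (D : Type*) [NonUnitalRing D] [Module ℂ D]
    [SMulCommClass ℂ D D] [StarRing D]
    (innp : D → D → ℂ)
    (h_add_left : ∀ x y z : D, innp (x + y) z = innp x z + innp y z)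
    (h_smul_left : ∀ (c : ℂ) (x z : D), innp (c • x) z = starRingEnd ℂ c * innp x z)
    (h_symm : ∀ x y : D, innp x y = starRingEnd ℂ (innp y x))
    (h_pos : ∀ x : D, 0 ≤ (innp x x).re)
    (h_def : ∀ x : D, innp x x = 0 → x = 0)
    (h_tomita_left : ∀ ξ ζ η : D, innp (star η * ζ) ξ = innp ζ (η * ξ))
    (ξ : D)
    (hbdd : ∃ C : ℝ, ∀ ζ : D, pnorm innp (ξ * ζ) ≤ C * pnorm innp ζ) :
    (∃ C : ℝ, ∀ η : D, pnorm innp (star (η * ξ)) ≤ C * pnorm innp (star η)) ∧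
    sSup {r : ℝ | ∃ ζ : D, pnorm innp ζ ≤ 1 ∧ r = pnorm innp (ξ * ζ)}
      = sSup {r : ℝ | ∃ η : D, pnorm innp (star η) ≤ 1 ∧ r = pnorm innp (star (η * ξ))} := by
  let cd : InnerProductSpace.Core ℂ D :=
    { inner := innp
      conj_inner_symm := fun x y => (h_symm x y).symm
      re_inner_nonneg := h_pos
      add_left := h_add_left
      smul_left := fun x y c => h_smul_left c x y
      definite := h_def }
  -- Its norm is `pnorm innp` definitionally; the `rfl`s below rely on this.
  let _ : NormedAddCommGroup D := cd.toNormedAddCommGroup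
  let _ : InnerProductSpace ℂ D := InnerProductSpace.ofCore cd.toCore
  obtain ⟨C, hC⟩ := hbdd
  have adj : ∀ a x y : D, ⟪star a * x, y⟫_ℂ = ⟪x, a * y⟫_ℂ := fun a x y => h_tomita_left y x a
  have adj' : ∀ x y : D, ⟪ξ * x, y⟫_ℂ = ⟪x, star ξ * y⟫_ℂ := fun x y => by
    simpa only [star_star] using adj (star ξ) x y
  let L₁ := (LinearMap.mulLeft ℂ ξ).mkContinuous C hC
  let L₂ := (LinearMap.mulLeft ℂ (star ξ)).mkContinuous ‖L₁‖
    (norm_apply_le_of_inner_map_eq L₁.opNorm_nonneg (adj ξ) L₁.le_opNorm)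
  have hL : ‖L₁‖ = ‖L₂‖ :=
    le_antisymm (L₁.opNorm_le_of_inner_map_eq L₂ adj') (L₂.opNorm_le_of_inner_map_eq L₁ (adj ξ))
  have star_reindex : {r : ℝ | ∃ η : D, pnorm innp (star η) ≤ 1 ∧ r = pnorm innp (star (η * ξ))}
      = {r : ℝ | ∃ ζ : D, ‖ζ‖ ≤ 1 ∧ r = ‖L₂ ζ‖} := by
    ext r
    refine ⟨fun ⟨η, hη, hr⟩ => ⟨star η, hη, by rw [hr, star_mul]; rfl⟩,
      fun ⟨ζ, hζ, hr⟩ => ⟨star ζ, by rwa [star_star], by rw [hr, star_mul, star_star]; rfl⟩⟩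
  refine ⟨⟨‖L₂‖, fun η => by rw [star_mul]; exact L₂.le_opNorm (star η)⟩, ?_⟩
  rw [star_reindex, L₂.sSup_norm_apply_of_norm_le_one_eq_opNorm, ← hL,
    ← L₁.sSup_norm_apply_of_norm_le_one_eq_opNorm]
  rfl

/-- If left multiplication `L_ξ : ζ ↦ ξζ` is bounded w.r.t.
`‖·‖₊`, then right multiplication `R_ξ : η ↦ ηξ` is bounded w.r.t.
`‖·‖⁻ = ‖(·)⋆‖₊`, with the same operator norm. -/
theorem tomita_left_bounded_iff_right_bounded
    (D : Type*) [NonUnitalRing D] [Module ℂ D]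
    [IsScalarTower ℂ D D] [SMulCommClass ℂ D D] [StarRing D] [StarModule ℂ D]
    (innp : D → D → ℂ)
    (h_add_left : ∀ x y z : D, innp (x + y) z = innp x z + innp y z)
    (h_add_right : ∀ x y z : D, innp x (y + z) = innp x y + innp x z)
    (h_smul_left : ∀ (c : ℂ) (x z : D), innp (c • x) z = starRingEnd ℂ c * innp x z)
    (h_smul_right : ∀ (c : ℂ) (x z : D), innp x (c • z) = c * innp x z)
    (h_symm : ∀ x y : D, innp x y = starRingEnd ℂ (innp y x))
    (h_pos : ∀ x : D, 0 ≤ (innp x x).re)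
    (h_def : ∀ x : D, innp x x = 0 → x = 0)
    (h_tomita_left : ∀ ξ ζ η : D, innp (star η * ζ) ξ = innp ζ (η * ξ))
    (h_tomita_right : ∀ ξ ζ η : D,
      innp (star ξ) (star (η * star ζ)) = innp (star (ξ * ζ)) (star η))
    (ξ : D)
    (hbdd : ∃ C : ℝ, ∀ ζ : D, pnorm innp (ξ * ζ) ≤ C * pnorm innp ζ) :
    (∃ C : ℝ, ∀ η : D, pnorm innp (star (η * ξ)) ≤ C * pnorm innp (star η)) ∧
    sSup {r : ℝ | ∃ ζ : D, pnorm innp ζ ≤ 1 ∧ r = pnorm innp (ξ * ζ)}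
      = sSup {r : ℝ | ∃ η : D, pnorm innp (star η) ≤ 1 ∧ r = pnorm innp (star (η * ξ))} :=
  tomita_left_bounded_iff_right_bounded_general D innp h_add_left h_smul_left h_symm h_pos h_def
    h_tomita_left ξ hbdd

end
end

section
/- (Theorem 3, general decomposition under a supporting identity.) Let 𝔞 be a complex associative *-algebra with antilinear involution a ↦ a⋆ satisfying (ab)⋆ = b⋆a⋆, let θ = θ⋆ be a two-sided annihilator, l : 𝔞 → ℂ a linear functional with l(θ) = 1, and let e ∈ 𝔞 satisfy e⋆ = e, e² = e, and ac = aec + l(ac − aec)θ for all a, c ∈ 𝔞. For each a ∈ 𝔞 set c := ae + ea − eae and b := a − c. Then: (i) be = 0 and eb = 0, so a = b + c with b in the Brownian part 𝔟 := {x ∈ 𝔞 : xe = 0 = ex}; (ii) for every b' ∈ 𝔟 and a' ∈ 𝔞 one has b'a' = l(b'a')θ and a'b' = l(a'b')θ, so 𝔟·𝔞 ⊆ ℂθ and 𝔞·𝔟 ⊆ ℂθ; (iii) bc = 0 and cb = 0; (iv) c⋆c = a⋆a + l(c⋆c − a⋆a)θ, so c⋆c and a⋆a differ by a multiple of the death θ.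 -/
/-!
Statement 16 (Theorem 3): decomposition of an Itô *-algebra with a supporting
self-adjoint idempotent `e` into a Brownian part and a Lévy part.
-/

/-- **Theorem 3, general decomposition.** Let `𝔞` be a complex
associative *-algebra, `θ = θ⋆` a two-sided annihilator, `l` linear with
`l(θ) = 1`, and `e = e⋆ = e²` satisfying `ac = aec + l(ac − aec)θ`.  For
`c := ae + ea − eae` and `b := a − c`: (i) `be = 0 = eb`; (ii) every `b'` with
`b'e = 0 = eb'` satisfies `b'a' = l(b'a')θ` and `a'b' = l(a'b')θ`;
(iii) `bc = 0 = cb`; (iv) `c⋆c = a⋆a + l(c⋆c − a⋆a)θ`. -/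
theorem ito_algebra_general_decomposition
    (𝔞 : Type*) [NonUnitalRing 𝔞] [Module ℂ 𝔞]
    [IsScalarTower ℂ 𝔞 𝔞] [SMulCommClass ℂ 𝔞 𝔞] [StarRing 𝔞] [StarModule ℂ 𝔞]
    (θ : 𝔞) (hθstar : star θ = θ) (hθ : ∀ x : 𝔞, θ * x = 0 ∧ x * θ = 0)
    (l : 𝔞 →ₗ[ℂ] ℂ) (hl : l θ = 1)
    (e : 𝔞) (he_star : star e = e) (he_idem : e * e = e)
    (he : ∀ a c : 𝔞, a * c = a * e * c + l (a * c - a * e * c) • θ) :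
    ∀ a : 𝔞,
      -- (i) b := a - (ae + ea - eae) is annihilated by e on both sides
      ((a - (a * e + e * a - e * a * e)) * e = 0 ∧
        e * (a - (a * e + e * a - e * a * e)) = 0) ∧
      -- (ii) the Brownian part multiplies everything into ℂθ
      (∀ b' a' : 𝔞, b' * e = 0 → e * b' = 0 →
        b' * a' = l (b' * a') • θ ∧ a' * b' = l (a' * b') • θ) ∧
      -- (iii) the two parts are mutually orthogonal
      ((a - (a * e + e * a - e * a * e)) * (a * e + e * a - e * a * e) = 0 ∧
        (a * e + e * a - e * a * e) * (a - (a * e + e * a - e * a * e)) = 0) ∧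
      -- (iv) c⋆c agrees with a⋆a up to a multiple of the death θ
      star (a * e + e * a - e * a * e) * (a * e + e * a - e * a * e)
        = star a * a
          + l (star (a * e + e * a - e * a * e) * (a * e + e * a - e * a * e)
                - star a * a) • θ := by
  intro a
  have hθl : ∀ x : 𝔞, θ * x = 0 := fun x => (hθ x).1
  have hθr : ∀ x : 𝔞, x * θ = 0 := fun x => (hθ x).2
  -- part (ii)
  have hii : ∀ b' a' : 𝔞, b' * e = 0 → e * b' = 0 →
      b' * a' = l (b' * a') • θ ∧ a' * b' = l (a' * b') • θ := by
    intro b' a' h1 h2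
    constructor
    · have h := he b' a'
      rw [h1, zero_mul, sub_zero, zero_add] at h
      exact h
    · have h := he a' b'
      rw [mul_assoc, h2, mul_zero, sub_zero, zero_add] at h
      exact h
  set c := a * e + e * a - e * a * e with hc
  set b := a - c with hb
  clear_value b c
  have hbe : b * e = 0 := by
    simp only [hb, hc, sub_mul, add_mul, mul_assoc, he_idem]
    abel
  have heb : e * b = 0 := by
    simp only [hb, hc, mul_sub, mul_add, ← mul_assoc, he_idem]
    abel
  refine ⟨⟨hbe, heb⟩, hii, ?_, ?_⟩
  · -- (iii)
    have hba : b * a = l (b * a) • θ := (hii b a hbe heb).1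
    constructor
    · -- b * c = 0
      have h1 : b * (a * e) = 0 := by
        rw [← mul_assoc, hba, smul_mul_assoc, hθl, smul_zero]
      have h2 : b * (e * a) = 0 := by rw [← mul_assoc, hbe, zero_mul]
      have h3 : b * (e * a * e) = 0 := by
        rw [show e * a * e = e * (a * e) by rw [mul_assoc], ← mul_assoc, hbe, zero_mul]
      rw [hc, mul_sub, mul_add, h1, h2, h3]; abel
    · -- c * b = 0
      have hab : a * b = l (a * b) • θ := (hii b a hbe heb).2
      have h1 : a * e * b = 0 := by rw [mul_assoc, heb, mul_zero]
      have h2 : e * a * b = 0 := by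
        rw [mul_assoc, hab, mul_smul_comm, hθr, smul_zero]
      have h3 : e * a * e * b = 0 := by rw [mul_assoc, heb, mul_zero]
      rw [hc, sub_mul, add_mul, h1, h2, h3]; abel
  · -- (iv)
    have hsbe : star b * e = 0 := by rw [← he_star, ← star_mul, heb, star_zero]
    have hesb : e * star b = 0 := by rw [← he_star, ← star_mul, hbe, star_zero]
    have hbb : star b * b = l (star b * b) • θ := (hii (star b) b hsbe hesb).1
    have hbc : star b * c = l (star b * c) • θ := (hii (star b) c hsbe hesb).1
    have hcb : star c * b = l (star c * b) • θ := (hii b (star c) hbe heb).2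
    have ha : a = b + c := by rw [hb]; abel
    have has : star a * a = star c * c
        + (l (star b * b) + l (star b * c) + l (star c * b)) • θ := by
      conv_lhs => rw [ha]
      rw [star_add, add_mul, mul_add, mul_add, hbb, hbc, hcb, add_smul, add_smul]
      simp only [map_smul, smul_eq_mul, hl, mul_one]
      abel
    rw [has]
    have hd : star c * c - (star c * c
        + (l (star b * b) + l (star b * c) + l (star c * b)) • θ)
        = (-(l (star b * b) + l (star b * c) + l (star c * b))) • θ := by
      module
    rw [hd, map_smul, smul_eq_mul, hl, mul_one, neg_smul]
    module
end
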